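/- In the Gaussian location model, if θ̂_n satisfies the sparsity condition P_{n,θ}(θ̂_n = 0) → 1 for θ = 0, and l : ℝ → [0,∞) is any nonnegative loss function, then sup_{θ∈ℝ} E_{n,θ}[l(√n(θ̂_n − θ))] → sup_{s∈ℝ} l(s) as n → ∞. -/

import Mathlib

open MeasureTheory ProbabilityTheory Filter Topology

/-- Joint law of a sample of size `n` of i.i.d. `N(θ,1)` observations. -/
noncomputable def gaussP (n : ℕ) (θ : ℝ) : Measure (Fin n → ℝ) :=
  Measure.pi fun _ => gaussianReal θ 1

/-!
The upper bound holds pointwise. For the lower bound fix `s` and test at the local alternative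
`θₙ = -s/√n`: on the event `{θ̂ₙ = 0}` the loss equals `l s`, so the maximal risk is at least
`l s · P_{n,θₙ}(θ̂ₙ = 0)`. By Cauchy–Schwarz, `P_{n,θₙ}(A) ≤ (P_{n,0}(A) · E_{n,0}[Lₙ²])^{1/2}` for
the likelihood ratio `Lₙ`, and `E_{n,0}[Lₙ²] = exp(nθₙ²) = exp(s²)` stays bounded. Hence
`P_{n,θₙ}` is contiguous to `P_{n,0}` and `P_{n,θₙ}(θ̂ₙ = 0) → 1`.
-/

open scoped ENNReal

section Pi

variable {ι : Type*} [Fintype ι] {X : ι → Type*} [∀ i, MeasurableSpace (X i)]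
  {μ : ∀ i, Measure (X i)} [∀ i, IsProbabilityMeasure (μ i)]

theorem lintegral_pi_prod_eq_prod {f : ∀ i, X i → ℝ≥0∞} (hf : ∀ i, Measurable (f i)) :
    ∫⁻ x, ∏ i, f i (x i) ∂Measure.pi μ = ∏ i, ∫⁻ y, f i y ∂μ i := by
  rw [lintegral_prod_eq_prod_lintegral_of_indepFun _ _
    (iIndepFun_pi (X := f) fun i => (hf i).aemeasurable)
    fun i => (hf i).comp (measurable_pi_apply i)]
  exact Finset.prod_congr rfl fun i _ => (measurePreserving_eval μ i).lintegral_comp (hf i)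

theorem Measure.pi_eq_withDensity {ν : ∀ i, Measure (X i)} [∀ i, SigmaFinite (ν i)]
    {f : ∀ i, X i → ℝ≥0∞} (hf : ∀ i, Measurable (f i)) (hν : ∀ i, ν i = (μ i).withDensity (f i)) :
    Measure.pi ν = (Measure.pi μ).withDensity fun x => ∏ i, f i (x i) := by
  refine Measure.pi_eq (μ := ν) fun s hs => ?_
  have hbox : (Set.univ.pi s).indicator (fun x => ∏ i, f i (x i))
      = fun x => ∏ i, (s i).indicator (f i) (x i) := by
    funext x
    by_cases hx : ∀ i, x i ∈ s i
    · rw [Set.indicator_of_mem (Set.mem_univ_pi.2 hx)]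
      exact Finset.prod_congr rfl fun i _ => (Set.indicator_of_mem (hx i) _).symm
    · obtain ⟨i, hi⟩ := not_forall.1 hx
      rw [Set.indicator_of_notMem (mt Set.mem_univ_pi.1 hx)]
      exact (Finset.prod_eq_zero (Finset.mem_univ i) (Set.indicator_of_notMem hi _)).symm
  rw [withDensity_apply _ (MeasurableSet.univ_pi hs),
    ← lintegral_indicator (MeasurableSet.univ_pi hs), hbox,
    lintegral_pi_prod_eq_prod fun i => (hf i).indicator (hs i)]
  exact Finset.prod_congr rfl fun i _ => by
    rw [lintegral_indicator (hs i), hν i, withDensity_apply _ (hs i)]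

end Pi

theorem withDensity_apply_le_sqrt_measure_mul_lintegral_sq {α : Type*} [MeasurableSpace α]
    {μ : Measure α} [SFinite μ] {f : α → ℝ≥0∞} (hf : AEMeasurable f μ) (s : Set α) :
    μ.withDensity f s ≤ (μ s * ∫⁻ x, f x ^ 2 ∂μ) ^ (1 / 2 : ℝ) := by
  have hcs := ENNReal.lintegral_mul_le_Lp_mul_Lq (μ.restrict s) Real.HolderConjugate.two_two
    aemeasurable_const hf.restrict (f := 1)
  simp only [Pi.one_apply, one_mul, one_pow, lintegral_const, Measure.restrict_apply_univ,
    ENNReal.rpow_two] at hcs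
  rw [withDensity_apply' _ s, ENNReal.mul_rpow_of_nonneg _ _ (by norm_num)]
  refine hcs.trans ?_
  gcongr
  exact Measure.restrict_le_self

/-- Contiguity from a uniform bound on the second moments of the likelihood ratios. -/
theorem tendsto_withDensity_apply_nhds_zero {X : ℕ → Type*} [∀ n, MeasurableSpace (X n)]
    {μ : ∀ n, Measure (X n)} [∀ n, SFinite (μ n)] {f : ∀ n, X n → ℝ≥0∞}
    (hf : ∀ n, AEMeasurable (f n) (μ n)) {C : ℝ≥0∞} (hC : C ≠ ∞)
    (hbdd : ∀ᶠ n in atTop, ∫⁻ x, f n x ^ 2 ∂μ n ≤ C) {s : ∀ n, Set (X n)}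
    (hs : Tendsto (fun n => μ n (s n)) atTop (𝓝 0)) :
    Tendsto (fun n => (μ n).withDensity (f n) (s n)) atTop (𝓝 0) := by
  have hbound : Tendsto (fun n => (μ n (s n) * C) ^ (1 / 2 : ℝ)) atTop (𝓝 0) := by
    have hmul := ENNReal.Tendsto.mul_const hs (Or.inr hC)
    rw [zero_mul] at hmul
    simpa [Function.comp_def] using
      ((ENNReal.continuous_rpow_const (y := 1 / 2)).tendsto 0).comp hmul
  refine tendsto_of_tendsto_of_tendsto_of_le_of_le' tendsto_const_nhds hbound
    (.of_forall fun _ => zero_le) ?_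
  filter_upwards [hbdd] with n hn
  exact (withDensity_apply_le_sqrt_measure_mul_lintegral_sq (hf n) (s n)).trans (by gcongr)

theorem tendsto_measure_compl_nhds_zero_iff {X : ℕ → Type*} [∀ n, MeasurableSpace (X n)]
    {μ : ∀ n, Measure (X n)} [∀ n, IsProbabilityMeasure (μ n)] {s : ∀ n, Set (X n)}
    (hs : ∀ n, MeasurableSet (s n)) :
    Tendsto (fun n => μ n (s n)ᶜ) atTop (𝓝 0) ↔ Tendsto (fun n => μ n (s n)) atTop (𝓝 1) := by
  simp_rw [prob_compl_eq_one_sub (hs _)]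
  constructor <;> intro h
  · simpa [ENNReal.sub_sub_cancel ENNReal.one_ne_top prob_le_one] using
      ENNReal.Tendsto.sub tendsto_const_nhds h (Or.inl ENNReal.one_ne_top)
  · simpa using ENNReal.Tendsto.sub tendsto_const_nhds h (Or.inl ENNReal.one_ne_top)

noncomputable def gaussianLikelihoodRatio (θ x : ℝ) : ℝ≥0∞ :=
  ENNReal.ofReal (Real.exp (θ * x - θ ^ 2 / 2))

@[fun_prop]
theorem measurable_gaussianLikelihoodRatio (θ : ℝ) :
    Measurable fun x => gaussianLikelihoodRatio θ x := by
  unfold gaussianLikelihoodRatio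
  fun_prop

theorem gaussianReal_eq_withDensity_gaussianLikelihoodRatio (θ : ℝ) :
    gaussianReal θ 1 = (gaussianReal 0 1).withDensity (gaussianLikelihoodRatio θ) := by
  rw [gaussianReal_of_var_ne_zero 0 one_ne_zero, gaussianReal_of_var_ne_zero θ one_ne_zero,
    ← withDensity_mul _ (measurable_gaussianPDF 0 1) (measurable_gaussianLikelihoodRatio θ)]
  congr 1
  funext x
  simp only [Pi.mul_apply, gaussianPDF, gaussianLikelihoodRatio,
    ← ENNReal.ofReal_mul (gaussianPDFReal_nonneg 0 1 x)]
  congr 1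
  simp only [gaussianPDFReal, NNReal.coe_one, mul_one, sub_zero]
  rw [mul_assoc, ← Real.exp_add]
  ring_nf

theorem lintegral_gaussianLikelihoodRatio_sq (θ : ℝ) :
    ∫⁻ x, gaussianLikelihoodRatio θ x ^ 2 ∂gaussianReal 0 1
      = ENNReal.ofReal (Real.exp (θ ^ 2)) := by
  have hsq : ∀ x, gaussianLikelihoodRatio θ x ^ 2
      = ENNReal.ofReal (Real.exp (-θ ^ 2)) * ENNReal.ofReal (Real.exp (2 * θ * x)) := fun x => by
    rw [gaussianLikelihoodRatio, ← ENNReal.ofReal_pow (Real.exp_pos _).le,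
      ← ENNReal.ofReal_mul (Real.exp_pos _).le, ← Real.exp_nat_mul, ← Real.exp_add]
    ring_nf
  have hmgf := congrFun (mgf_id_gaussianReal (μ := 0) (v := 1)) (2 * θ)
  simp only [mgf, id, NNReal.coe_one] at hmgf
  simp_rw [hsq]
  rw [lintegral_const_mul _ (by fun_prop), ← ofReal_integral_eq_lintegral_ofReal
    (integrable_exp_mul_gaussianReal _) (.of_forall fun _ => (Real.exp_pos _).le), hmgf,
    ← ENNReal.ofReal_mul (Real.exp_pos _).le, ← Real.exp_add]
  ring_nf

instance isProbabilityMeasure_gaussP (n : ℕ) (θ : ℝ) : IsProbabilityMeasure (gaussP n θ) := by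
  unfold gaussP; infer_instance

theorem gaussP_eq_withDensity (n : ℕ) (θ : ℝ) :
    gaussP n θ = (gaussP n 0).withDensity fun y => ∏ i, gaussianLikelihoodRatio θ (y i) :=
  Measure.pi_eq_withDensity (fun _ => measurable_gaussianLikelihoodRatio θ)
    fun _ => gaussianReal_eq_withDensity_gaussianLikelihoodRatio θ

theorem lintegral_prod_gaussianLikelihoodRatio_sq (n : ℕ) (θ : ℝ) :
    ∫⁻ y, (∏ i, gaussianLikelihoodRatio θ (y i)) ^ 2 ∂gaussP n 0
      = ENNReal.ofReal (Real.exp (n * θ ^ 2)) := by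
  simp_rw [← Finset.prod_pow]
  rw [gaussP, lintegral_pi_prod_eq_prod fun _ => (measurable_gaussianLikelihoodRatio θ).pow_const 2]
  simp [lintegral_gaussianLikelihoodRatio_sq, ← ENNReal.ofReal_pow (Real.exp_pos _).le,
    ← Real.exp_nat_mul]

theorem tendsto_gaussP_local_apply_nhds_zero (c : ℝ) {s : ∀ n, Set (Fin n → ℝ)}
    (hs : Tendsto (fun n => gaussP n 0 (s n)) atTop (𝓝 0)) :
    Tendsto (fun n => gaussP n (c / Real.sqrt n) (s n)) atTop (𝓝 0) := by
  simp_rw [gaussP_eq_withDensity _ (c / Real.sqrt _)]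
  refine tendsto_withDensity_apply_nhds_zero (C := ENNReal.ofReal (Real.exp (c ^ 2)))
    (fun _ => Measurable.aemeasurable (by fun_prop))
    ENNReal.ofReal_ne_top (.of_forall fun n => ?_) hs
  rw [lintegral_prod_gaussianLikelihoodRatio_sq]
  gcongr
  rcases n.eq_zero_or_pos with rfl | hn
  · simp [sq_nonneg]
  · rw [div_pow, Real.sq_sqrt n.cast_nonneg]
    exact (mul_div_cancel₀ _ (by positivity)).le

noncomputable def gaussRisk (est : (n : ℕ) → (Fin n → ℝ) → ℝ) (l : ℝ → ℝ) (n : ℕ) (θ : ℝ) : ℝ≥0∞ :=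
  ∫⁻ y, ENNReal.ofReal (l (Real.sqrt n * (est n y - θ))) ∂(gaussP n θ)

theorem gaussRisk_le_iSup (est : (n : ℕ) → (Fin n → ℝ) → ℝ) (l : ℝ → ℝ) (n : ℕ) (θ : ℝ) :
    gaussRisk est l n θ ≤ ⨆ s, ENNReal.ofReal (l s) := by
  calc gaussRisk est l n θ ≤ ∫⁻ _, ⨆ s, ENNReal.ofReal (l s) ∂gaussP n θ :=
        lintegral_mono fun _ => le_iSup (fun s => ENNReal.ofReal (l s)) _
    _ = ⨆ s, ENNReal.ofReal (l s) := by simp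

theorem mul_gaussP_le_gaussRisk {est : (n : ℕ) → (Fin n → ℝ) → ℝ} {n : ℕ} (hn : n ≠ 0)
    (hA : MeasurableSet {y | est n y = 0}) (l : ℝ → ℝ) (s : ℝ) :
    ENNReal.ofReal (l s) * gaussP n (-s / Real.sqrt n) {y | est n y = 0}
      ≤ gaussRisk est l n (-s / Real.sqrt n) := by
  have hsqrt : Real.sqrt n ≠ 0 := by positivity
  set θ := -s / Real.sqrt n with hθ
  calc ENNReal.ofReal (l s) * gaussP n θ {y | est n y = 0}
      = ∫⁻ y in {y | est n y = 0},
          ENNReal.ofReal (l (Real.sqrt n * (est n y - θ))) ∂gaussP n θ := by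
        rw [setLIntegral_congr_fun hA fun y (hy : est n y = 0) => by
          rw [hy, zero_sub, hθ, neg_div, neg_neg, mul_div_cancel₀ _ hsqrt], setLIntegral_const]
    _ ≤ gaussRisk est l n θ := setLIntegral_le_lintegral _ _

theorem stmt_2_general
    (est : (n : ℕ) → (Fin n → ℝ) → ℝ)
    (hmeas : ∀ n, Measurable (est n))
    (hsparse : Tendsto (fun n => gaussP n 0 {y | est n y = 0}) atTop (𝓝 1))
    (l : ℝ → ℝ) :
    Tendsto (fun n : ℕ => ⨆ θ : ℝ,
        ∫⁻ y, ENNReal.ofReal (l (Real.sqrt n * (est n y - θ))) ∂(gaussP n θ))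
      atTop (𝓝 (⨆ s : ℝ, ENNReal.ofReal (l s))) := by
  have hA : ∀ n, MeasurableSet {y | est n y = 0} := fun n => hmeas n (measurableSet_singleton 0)
  have hlocal : ∀ s : ℝ,
      Tendsto (fun n => gaussP n (-s / Real.sqrt n) {y | est n y = 0}) atTop (𝓝 1) := fun s =>
    (tendsto_measure_compl_nhds_zero_iff hA).1 <| tendsto_gaussP_local_apply_nhds_zero (-s) <|
      (tendsto_measure_compl_nhds_zero_iff hA).2 hsparse
  refine tendsto_of_le_liminf_of_limsup_le (iSup_le fun s => ?_) (limsup_le_of_le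
    (by isBoundedDefault) (.of_forall fun n => iSup_le (gaussRisk_le_iSup est l n)))
  calc ENNReal.ofReal (l s)
      = liminf (fun n =>
          ENNReal.ofReal (l s) * gaussP n (-s / Real.sqrt n) {y | est n y = 0}) atTop := by
        simpa using
          ((ENNReal.Tendsto.const_mul (hlocal s) (Or.inr ENNReal.ofReal_ne_top)).liminf_eq).symm
    _ ≤ liminf (fun n => ⨆ θ, gaussRisk est l n θ) atTop :=
        liminf_le_liminf ((eventually_ne_atTop 0).mono fun n hn =>
          (mul_gaussP_le_gaussRisk hn (hA n) l s).trans (le_iSup (gaussRisk est l n) _))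

theorem stmt_2
    (est : (n : ℕ) → (Fin n → ℝ) → ℝ)
    (hmeas : ∀ n, Measurable (est n))
    (hsparse : Tendsto (fun n => gaussP n 0 {y | est n y = 0}) atTop (𝓝 1))
    (l : ℝ → ℝ) (hl : ∀ s, 0 ≤ l s) (hlmeas : Measurable l) :
    Tendsto (fun n : ℕ => ⨆ θ : ℝ,
        ∫⁻ y, ENNReal.ofReal (l (Real.sqrt n * (est n y - θ))) ∂(gaussP n θ))
      atTop (𝓝 (⨆ s : ℝ, ENNReal.ofReal (l s))) :=
  stmt_2_general est hmeas hsparse l
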